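/- (Sufficiency part of Uhlmann's theorem, as a corollary of Theorem 2.) Let p_1,…,p_M be nonnegative reals with Σ_k p_k = 1 and let U_1,…,U_M be unitary operators on ℂ^D. Then for every density matrix ρ₁ on ℂ^D, the density matrix ρ₂ = Σ_k p_k U_k ρ₁ U_k† satisfies λ(ρ₂) ≺ λ(ρ₁). -/

import Mathlib

open Matrix BigOperators
open scoped ComplexOrder

/-- The sum of the `k` largest entries of `x`, expressed as the supremum of the
sums of `x` over all subsets of cardinality `k`. -/
noncomputable def kMaxSum {D : ℕ} (x : Fin D → ℝ) (k : ℕ) : ℝ :=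
  sSup ((fun A : Finset (Fin D) => ∑ i ∈ A, x i) '' {A : Finset (Fin D) | A.card = k})

/-- `x` is majorized by `y` (`x ≺ y`): every partial sum of the `k` largest
entries of `x` is at most the corresponding sum for `y`, and the total sums
coincide. -/
def MajorizedBy {D : ℕ} (x y : Fin D → ℝ) : Prop :=
  (∀ k, k ≤ D → kMaxSum x k ≤ kMaxSum y k) ∧ (∑ i, x i = ∑ i, y i)

/-!
Let `V` and `W` be unitaries diagonalizing `ρ₂` and `ρ₁`. Reading off the diagonal of
`V† ρ₂ V = ∑ₖ pₖ (V† Uₖ W) diag λ(ρ₁) (V† Uₖ W)†` gives `λ(ρ₂) = S λ(ρ₁)` with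
`S = ∑ₖ pₖ |V† Uₖ W|²` (entrywise), a convex combination of unistochastic matrices and hence
doubly stochastic. A doubly stochastic image is majorized: the sum of any `k` entries of `S x`
is `∑ⱼ xⱼ tⱼ` with weights `tⱼ ∈ [0, 1]` of total mass `k`, and such a weighted sum is at most the
sum of the `k` largest entries of `x`.
-/

open Finset

section Majorization

variable {D : ℕ}

lemma le_kMaxSum (x : Fin D → ℝ) (A : Finset (Fin D)) : ∑ i ∈ A, x i ≤ kMaxSum x #A :=
  le_csSup ((Set.toFinite _).image _).bddAbove ⟨A, rfl, rfl⟩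

lemma kMaxSum_le (x : Fin D → ℝ) {k : ℕ} (hk : k ≤ D) {C : ℝ}
    (h : ∀ A : Finset (Fin D), #A = k → ∑ i ∈ A, x i ≤ C) : kMaxSum x k ≤ C := by
  obtain ⟨A, -, hA⟩ := exists_subset_card_eq (s := (univ : Finset (Fin D))) (by simpa using hk)
  refine csSup_le ⟨_, A, hA, rfl⟩ ?_
  rintro _ ⟨A, hA, rfl⟩
  exact h A hA

lemma exists_card_eq_forall_mem_forall_notMem_le (x : Fin D → ℝ) {k : ℕ} (hk : k ≤ D) :
    ∃ A : Finset (Fin D), #A = k ∧ ∀ i ∈ A, ∀ j ∉ A, x j ≤ x i := by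
  obtain ⟨A, hAk, hAmax⟩ := exists_max_image (powersetCard k univ) (fun B => ∑ i ∈ B, x i)
    (powersetCard_nonempty.2 (by simpa using hk))
  rw [mem_powersetCard] at hAk
  refine ⟨A, hAk.2, fun i hi j hj => ?_⟩
  have hj' : j ∉ A.erase i := fun h => hj (mem_of_mem_erase h)
  have hswap := hAmax (insert j (A.erase i)) <| mem_powersetCard.2 ⟨subset_univ _, by
    rw [card_insert_of_notMem hj', card_erase_of_mem hi, hAk.2]
    have : 0 < k := hAk.2 ▸ card_pos.2 ⟨i, hi⟩
    omega⟩
  rw [sum_insert hj', sum_erase_eq_sub hi] at hswap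
  linarith

lemma sum_mul_le_kMaxSum (x t : Fin D → ℝ) (ht0 : ∀ j, 0 ≤ t j) (ht1 : ∀ j, t j ≤ 1) {k : ℕ}
    (htk : ∑ j, t j = k) : ∑ j, x j * t j ≤ kMaxSum x k := by
  have hk : k ≤ D := by
    have := sum_le_sum fun j (_ : j ∈ univ) => ht1 j
    simp only [htk, sum_const, card_univ, Fintype.card_fin, nsmul_eq_mul, mul_one] at this
    exact_mod_cast this
  obtain ⟨A, hAk, hA⟩ := exists_card_eq_forall_mem_forall_notMem_le x hk
  refine le_trans ?_ (hAk ▸ le_kMaxSum x A)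
  rcases A.eq_empty_or_nonempty with rfl | ⟨i₀, hi₀⟩
  · have ht : ∀ j ∈ univ, t j = 0 :=
      (sum_eq_zero_iff_of_nonneg fun j _ => ht0 j).1 <| by
        rw [htk, ← hAk, card_empty, Nat.cast_zero]
    simp [ht]
  set μ := A.inf' ⟨i₀, hi₀⟩ x
  -- past the threshold `μ = min_A x`, the entries are nonnegative on `A` and nonpositive off it
  have hshift : ∑ j, (x j - μ) * t j ≤ ∑ j, if j ∈ A then x j - μ else 0 := by
    refine sum_le_sum fun j _ => ?_
    split_ifs with hj
    · exact mul_le_of_le_one_right (sub_nonneg.2 (inf'_le _ hj)) (ht1 j)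
    · exact mul_nonpos_of_nonpos_of_nonneg
        (sub_nonpos.2 (le_inf' _ _ fun i hi => hA i hi j hj)) (ht0 j)
  simp only [sub_mul, sum_sub_distrib, ← mul_sum, htk, ← sum_filter, filter_mem_eq_inter,
    univ_inter, sum_const, hAk, nsmul_eq_mul] at hshift
  linarith

theorem majorizedBy_mulVec_of_mem_doublyStochastic {S : Matrix (Fin D) (Fin D) ℝ}
    (hS : S ∈ doublyStochastic ℝ (Fin D)) (x : Fin D → ℝ) : MajorizedBy (S *ᵥ x) x := by
  refine ⟨fun k hk => kMaxSum_le _ hk fun A hA => ?_, sum_mulVec_of_mem_doublyStochastic hS⟩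
  have hsum : ∑ i ∈ A, (S *ᵥ x) i = ∑ j, x j * ∑ i ∈ A, S i j := by
    simp only [mulVec, dotProduct, mul_sum]
    rw [sum_comm]
    exact sum_congr rfl fun j _ => sum_congr rfl fun i _ => mul_comm _ _
  rw [hsum]
  refine sum_mul_le_kMaxSum x _ (fun j => sum_nonneg fun i _ => nonneg_of_mem_doublyStochastic hS)
    (fun j => ?_) ?_
  · calc ∑ i ∈ A, S i j ≤ ∑ i, S i j :=
          sum_le_sum_of_subset_of_nonneg (subset_univ A) fun i _ _ =>
            nonneg_of_mem_doublyStochastic hS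
      _ = 1 := sum_col_of_mem_doublyStochastic hS j
  · rw [sum_comm, sum_congr rfl fun i _ => sum_row_of_mem_doublyStochastic hS i, sum_const, hA,
      nsmul_one]

end Majorization

namespace Matrix

variable {n : Type*} [Fintype n]

/-- For unitary `X` this is the unistochastic matrix `(|X i j|²)`. -/
def entrywiseNormSq (X : Matrix n n ℂ) : Matrix n n ℝ :=
  of fun i j => Complex.normSq (X i j)

lemma mul_star_apply_self (X : Matrix n n ℂ) (i : n) :
    (X * star X) i i = ∑ j, (Complex.normSq (X i j) : ℂ) := by
  simp only [mul_apply, star_apply, RCLike.star_def, Complex.mul_conj]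

lemma star_mul_apply_self (X : Matrix n n ℂ) (j : n) :
    (star X * X) j j = ∑ i, (Complex.normSq (X i j) : ℂ) := by
  simp only [mul_apply, star_apply, RCLike.star_def, Complex.normSq_eq_conj_mul_self]

variable [DecidableEq n]

lemma entrywiseNormSq_mem_doublyStochastic {X : Matrix n n ℂ} (hX : X ∈ unitaryGroup n ℂ) :
    entrywiseNormSq X ∈ doublyStochastic ℝ n := by
  refine mem_doublyStochastic_iff_sum.2 ⟨fun i j => Complex.normSq_nonneg _, fun i => ?_,
    fun j => ?_⟩
  · have h := mul_star_apply_self X i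
    rw [mem_unitaryGroup_iff.1 hX, one_apply_eq] at h
    exact_mod_cast h.symm
  · have h := star_mul_apply_self X j
    rw [mem_unitaryGroup_iff'.1 hX, one_apply_eq] at h
    exact_mod_cast h.symm

lemma mul_diagonal_mul_star_apply_self (X : Matrix n n ℂ) (d : n → ℝ) (i : n) :
    (X * diagonal (RCLike.ofReal ∘ d) * star X : Matrix n n ℂ) i i =
      ((entrywiseNormSq X *ᵥ d) i : ℂ) := by
  rw [mul_apply]
  simp only [mul_diagonal, star_apply, RCLike.star_def, mulVec, dotProduct,
    entrywiseNormSq, of_apply, Complex.ofReal_sum, Complex.ofReal_mul]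
  refine Finset.sum_congr rfl fun j _ => ?_
  rw [mul_right_comm, Complex.mul_conj, Function.comp_apply, RCLike.ofReal_eq_complex_ofReal,
    mul_comm]

lemma IsHermitian.mul_mul_conjTranspose_apply_self {A : Matrix n n ℂ} (hA : A.IsHermitian)
    (Y : Matrix n n ℂ) (i : n) :
    (Y * A * Yᴴ) i i =
      ((entrywiseNormSq (Y * (hA.eigenvectorUnitary : Matrix n n ℂ)) *ᵥ hA.eigenvalues) i :
        ℂ) := by
  conv_lhs => rw [hA.spectral_theorem, Unitary.conjStarAlgAut_apply]
  rw [← mul_diagonal_mul_star_apply_self]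
  simp only [star_mul, star_eq_conjTranspose, Matrix.mul_assoc]

lemma IsHermitian.eigenvalues_apply_eq {B : Matrix n n ℂ} (hB : B.IsHermitian) (i : n) :
    (hB.eigenvalues i : ℂ) =
      (star (hB.eigenvectorUnitary : Matrix n n ℂ) * B * hB.eigenvectorUnitary) i i := by
  have h := hB.conjStarAlgAut_star_eigenvectorUnitary
  rw [Unitary.conjStarAlgAut_star_apply] at h
  rw [h, diagonal_apply_eq, Function.comp_apply, RCLike.ofReal_eq_complex_ofReal]

variable {ι : Type*} [Fintype ι]

lemma IsHermitian.eigenvalues_sum_smul_conj {A : Matrix n n ℂ} (hA : A.IsHermitian)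
    (p : ι → ℝ) (U : ι → Matrix n n ℂ)
    (hB : (∑ k, (p k : ℂ) • (U k * A * (U k)ᴴ)).IsHermitian) :
    hB.eigenvalues = (∑ k, p k • entrywiseNormSq (star (hB.eigenvectorUnitary : Matrix n n ℂ) *
      U k * (hA.eigenvectorUnitary : Matrix n n ℂ))) *ᵥ hA.eigenvalues := by
  funext i
  apply Complex.ofReal_injective
  rw [hB.eigenvalues_apply_eq, Matrix.mul_sum, Matrix.sum_mul, sum_apply, sum_mulVec,
    Finset.sum_apply, Complex.ofReal_sum]
  refine sum_congr rfl fun k _ => ?_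
  rw [Matrix.mul_smul, Matrix.smul_mul, smul_apply, smul_mulVec, Pi.smul_apply, smul_eq_mul,
    smul_eq_mul, Complex.ofReal_mul, ← hA.mul_mul_conjTranspose_apply_self]
  simp only [conjTranspose_mul, star_eq_conjTranspose, conjTranspose_conjTranspose,
    Matrix.mul_assoc]

end Matrix

theorem uhlmann_sufficiency_general {D M : ℕ}
    (p : Fin M → ℝ)
    (hp : ∀ k, 0 ≤ p k) (hpsum : ∑ k, p k = 1)
    (U : Fin M → Matrix (Fin D) (Fin D) ℂ)
    (hU : ∀ k, U k ∈ Matrix.unitaryGroup (Fin D) ℂ)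
    (ρ1 : Matrix (Fin D) (Fin D) ℂ)
    (hρ1 : ρ1.PosSemidef)
    (hρ2 : (∑ k, (p k : ℂ) • (U k * ρ1 * (U k)ᴴ)).IsHermitian) :
    MajorizedBy hρ2.eigenvalues hρ1.1.eigenvalues := by
  have hX : ∀ k, star (hρ2.eigenvectorUnitary : Matrix (Fin D) (Fin D) ℂ) * U k *
      (hρ1.1.eigenvectorUnitary : Matrix (Fin D) (Fin D) ℂ) ∈ unitaryGroup (Fin D) ℂ := fun k =>
    mul_mem (mul_mem (Unitary.star_mem (SetLike.coe_mem _)) (hU k)) (SetLike.coe_mem _)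
  rw [hρ1.1.eigenvalues_sum_smul_conj p U hρ2]
  exact majorizedBy_mulVec_of_mem_doublyStochastic (convex_doublyStochastic.sum_mem
    (fun k _ => hp k) hpsum fun k _ => entrywiseNormSq_mem_doublyStochastic (hX k)) _

/-- **Sufficiency part of Uhlmann's theorem.**  If `p` is a probability
distribution and the `U k` are unitary, then for every density matrix `ρ₁` the
random-unitary output `ρ₂ = Σ p_k U_k ρ₁ U_k†` satisfies `λ(ρ₂) ≺ λ(ρ₁)`. -/
theorem uhlmann_sufficiency {D M : ℕ}
    (p : Fin M → ℝ)
    (hp : ∀ k, 0 ≤ p k) (hpsum : ∑ k, p k = 1)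
    (U : Fin M → Matrix (Fin D) (Fin D) ℂ)
    (hU : ∀ k, U k ∈ Matrix.unitaryGroup (Fin D) ℂ)
    (ρ1 : Matrix (Fin D) (Fin D) ℂ)
    (hρ1 : ρ1.PosSemidef) (hρ1tr : ρ1.trace = 1)
    (hρ2 : (∑ k, (p k : ℂ) • (U k * ρ1 * (U k)ᴴ)).IsHermitian) :
    MajorizedBy hρ2.eigenvalues hρ1.1.eigenvalues :=
  uhlmann_sufficiency_general p hp hpsum U hU ρ1 hρ1 hρ2
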